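/- Let q ≥ 3 and λ ∈ (0,1], and set v = 3 mod (q−2) and u = ⌊3/(q−2)⌋. Then every boundary pair X satisfies ν(X) ≤ (1−λ)/(1 + λ + v·λ^{u+1} + (q−2−v)·λ^{u}). -/

import Mathlib

namespace PottsBP

/-- Vertices of the integer lattice ℤ². -/
abbrev V : Type := ℤ × ℤ

/-- Lattice adjacency on ℤ². -/
def Adj (x y : V) : Prop := (x.1 - y.1).natAbs + (x.2 - y.2).natAbs = 1

/-- `(u, v)` is a boundary edge of `R`, oriented with `u` outside `R` and `v` inside. -/
def IsBdryEdge (R : Finset V) (u v : V) : Prop := u ∉ R ∧ v ∈ R ∧ Adj u v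

/-- Configurations on region `R` with spins `{1,…,q}`, extended by `0` off `R`. -/
def Configs (q : ℕ) (R : Finset V) : Set (V → ℕ) :=
  {σ | (∀ v ∈ R, 1 ≤ σ v ∧ σ v ≤ q) ∧ ∀ v ∉ R, σ v = 0}

/-- A boundary pair: a nonempty finite region `R`, a distinguished boundary edge
`s = (w, f)` with `f ∈ R`, and a pair `(B, B')` of boundary configurations (maps from
boundary edges, represented by their (outside, inside) endpoint pairs, to `{0,…,q}`,
with `0` denoting a free edge) that differ only on `s`, assign spins from `{1,…,q}`
to `s`, and such that any two perpendicular boundary edges sharing their outside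
endpoint get the same spin in at least one of `B`, `B'`. -/
structure BoundaryPair (q : ℕ) where
  R : Finset V
  w : V
  f : V
  hw : w ∉ R
  hf : f ∈ R
  hadj : Adj w f
  B : V × V → ℕ
  B' : V × V → ℕ
  hBrange : ∀ u v, IsBdryEdge R u v → B (u, v) ≤ q
  hB'range : ∀ u v, IsBdryEdge R u v → B' (u, v) ≤ q
  hagree : ∀ u v, IsBdryEdge R u v → (u, v) ≠ (w, f) → B (u, v) = B' (u, v)
  hBs : 1 ≤ B (w, f) ∧ B (w, f) ≤ q
  hB's : 1 ≤ B' (w, f) ∧ B' (w, f) ≤ q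
  hperp : ∀ u v₁ v₂, IsBdryEdge R u v₁ → IsBdryEdge R u v₂ →
    (v₁.1 - u.1) * (v₂.1 - u.1) + (v₁.2 - u.2) * (v₂.2 - u.2) = 0 →
    B (u, v₁) = B (u, v₂) ∨ B' (u, v₁) = B' (u, v₂)

variable {q : ℕ}

/-- The number of monochromatic internal edges of `R` under `σ`. -/
noncomputable def monInt (R : Finset V) (σ : V → ℕ) : ℕ :=
  Set.ncard {e : Sym2 V | ∃ x y : V, e = s(x, y) ∧ Adj x y ∧ x ∈ R ∧ y ∈ R ∧ σ x = σ y}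

/-- `mon_σ(E(R_X) − {s_X})` for the boundary pair `X`: the number of monochromatic
edges, excluding the distinguished edge `s_X`, where a boundary edge is monochromatic
if its spin under `B_X` is in `{1,…,q}` and equals the spin `σ` gives its inner
endpoint. -/
noncomputable def monExS (X : BoundaryPair q) (σ : V → ℕ) : ℕ :=
  monInt X.R σ + Set.ncard {p : V × V | IsBdryEdge X.R p.1 p.2 ∧ p ≠ (X.w, X.f) ∧
    1 ≤ X.B p ∧ X.B p = σ p.2}

/-- `mon_σ(E(R_X))` with respect to an arbitrary boundary configuration `Bc`. -/
noncomputable def monFull (X : BoundaryPair q) (Bc : V × V → ℕ) (σ : V → ℕ) : ℕ :=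
  monInt X.R σ + Set.ncard {p : V × V | IsBdryEdge X.R p.1 p.2 ∧
    1 ≤ Bc p ∧ Bc p = σ p.2}

/-- `c_i`: the total weight (ignoring the edge `s_X`) of the configurations that
assign spin `i` to `f_X`. -/
noncomputable def ci (X : BoundaryPair q) (lam : ℝ) (i : ℕ) : ℝ :=
  ∑ᶠ σ ∈ {σ ∈ Configs q X.R | σ X.f = i}, lam ^ monExS X σ

/-- `c = Σ_{i ∉ C} c_i` where `C = {B_X(s_X), B'_X(s_X)}`. -/
noncomputable def cOut (X : BoundaryPair q) (lam : ℝ) : ℝ :=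
  ∑ i ∈ (Finset.Icc 1 q).filter
      (fun i => i ≠ X.B (X.w, X.f) ∧ i ≠ X.B' (X.w, X.f)), ci X lam i

/-- `μ(X) = max_{i ∈ C} (1−λ)c_i / ((1+λ)c_i + c)`. -/
noncomputable def mu (X : BoundaryPair q) (lam : ℝ) : ℝ :=
  max ((1 - lam) * ci X lam (X.B (X.w, X.f)) /
        ((1 + lam) * ci X lam (X.B (X.w, X.f)) + cOut X lam))
      ((1 - lam) * ci X lam (X.B' (X.w, X.f)) /
        ((1 + lam) * ci X lam (X.B' (X.w, X.f)) + cOut X lam))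

/-- The partition function of `X` with boundary configuration `Bc`. -/
noncomputable def Zbp (X : BoundaryPair q) (lam : ℝ) (Bc : V × V → ℕ) : ℝ :=
  ∑ᶠ σ ∈ Configs q X.R, lam ^ monFull X Bc σ

/-- The Gibbs distribution `π_{Bc}` on configurations of `R_X`. -/
noncomputable def gibbsbp (X : BoundaryPair q) (lam : ℝ) (Bc : V × V → ℕ)
    (σ : V → ℕ) : ℝ :=
  lam ^ monFull X Bc σ / Zbp X lam Bc

/-- `ψ` is a coupling of `π_{B_X}` and `π_{B'_X}`. -/
def IsCoupling (X : BoundaryPair q) (lam : ℝ)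
    (ψ : (V → ℕ) × (V → ℕ) → ℝ) : Prop :=
  (∀ p, 0 ≤ ψ p) ∧
  (∀ p : (V → ℕ) × (V → ℕ),
    (p.1 ∉ Configs q X.R ∨ p.2 ∉ Configs q X.R) → ψ p = 0) ∧
  (∀ σ ∈ Configs q X.R, (∑ᶠ σ' ∈ Configs q X.R, ψ (σ, σ')) = gibbsbp X lam X.B σ) ∧
  (∀ σ' ∈ Configs q X.R, (∑ᶠ σ ∈ Configs q X.R, ψ (σ, σ')) = gibbsbp X lam X.B' σ')

/-- The probability that a pair drawn from `ψ` disagrees at `f_X`. -/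
noncomputable def disagree (X : BoundaryPair q)
    (ψ : (V → ℕ) × (V → ℕ) → ℝ) : ℝ :=
  ∑ᶠ p ∈ {p : (V → ℕ) × (V → ℕ) | p.1 X.f ≠ p.2 X.f}, ψ p

/-- `ν(X)`: the minimum, over couplings `ψ` of `π_{B_X}` and `π_{B'_X}`, of the
probability that a pair drawn from `ψ` disagrees at `f_X`. -/
noncomputable def nu (X : BoundaryPair q) (lam : ℝ) : ℝ :=
  sInf {r : ℝ | ∃ ψ, IsCoupling X lam ψ ∧ r = disagree X ψ}

end PottsBP
namespace PottsBP
attribute [local instance] Classical.propDecidable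

noncomputable section
open Finset

lemma adj_symm {x y : V} (h : Adj x y) : Adj y x := by unfold Adj at *; omega

lemma adj_ne {x y : V} (h : Adj x y) : x ≠ y := by
  rintro rfl; unfold Adj at h; omega

/-- The four lattice neighbours of a point. -/
def nbrs (x : V) : Finset V := {(x.1+1,x.2),(x.1-1,x.2),(x.1,x.2+1),(x.1,x.2-1)}

lemma mem_nbrs {x y : V} : y ∈ nbrs x ↔ Adj x y := by
  simp only [nbrs, Finset.mem_insert, Finset.mem_singleton, Prod.ext_iff, Adj]
  omega

lemma card_nbrs (x : V) : (nbrs x).card = 4 := by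
  have h1 : ((x.1+1,x.2) : V) ∉ ({(x.1-1,x.2),(x.1,x.2+1),(x.1,x.2-1)} : Finset V) := by
    simp only [Finset.mem_insert, Finset.mem_singleton, Prod.mk.injEq]; omega
  have h2 : ((x.1-1,x.2) : V) ∉ ({(x.1,x.2+1),(x.1,x.2-1)} : Finset V) := by
    simp only [Finset.mem_insert, Finset.mem_singleton, Prod.mk.injEq]; omega
  have h3 : ((x.1,x.2+1) : V) ∉ ({(x.1,x.2-1)} : Finset V) := by
    simp only [Finset.mem_singleton, Prod.mk.injEq]; omega
  rw [nbrs, Finset.card_insert_of_notMem h1, Finset.card_insert_of_notMem h2,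
    Finset.card_insert_of_notMem h3, Finset.card_singleton]

/-- Lexicographic strict order on `V`. -/
def lexLt (a b : V) : Prop := a.1 < b.1 ∨ (a.1 = b.1 ∧ a.2 < b.2)

lemma lex_total {x y : V} (h : x ≠ y) : lexLt x y ∨ lexLt y x := by
  have hne : x.1 ≠ y.1 ∨ x.2 ≠ y.2 := by
    by_contra hc; push_neg at hc; exact h (Prod.ext hc.1 hc.2)
  unfold lexLt; omega

lemma lex_asymm {x y : V} (h : lexLt x y) : ¬ lexLt y x := by
  unfold lexLt at *; omega

/-- Canonically oriented internal edges of `R`. -/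
def OEdges (R : Finset V) : Finset (V × V) :=
  (R ×ˢ R).filter (fun p => Adj p.1 p.2 ∧ lexLt p.1 p.2)

lemma monInt_eq (R : Finset V) (σ : V → ℕ) :
    monInt R σ = ((OEdges R).filter (fun p => σ p.1 = σ p.2)).card := by
  have hset : {e : Sym2 V | ∃ x y : V, e = s(x, y) ∧ Adj x y ∧ x ∈ R ∧ y ∈ R ∧ σ x = σ y}
      = ↑(((OEdges R).filter (fun p => σ p.1 = σ p.2)).image (fun p => s(p.1, p.2))) := by
    ext e
    simp only [Set.mem_setOf_eq, Finset.coe_image, Set.mem_image, Finset.mem_coe,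
      Finset.mem_filter, OEdges, Finset.mem_product]
    constructor
    · rintro ⟨x, y, rfl, hadj, hx, hy, hσ⟩
      rcases lex_total (adj_ne hadj) with h | h
      · exact ⟨(x,y), ⟨⟨⟨hx,hy⟩, hadj, h⟩, hσ⟩, rfl⟩
      · exact ⟨(y,x), ⟨⟨⟨hy,hx⟩, adj_symm hadj, h⟩, hσ.symm⟩, Sym2.eq_swap⟩
    · rintro ⟨p, ⟨⟨⟨h1,h2⟩, ha, _⟩, hσ⟩, rfl⟩
      exact ⟨p.1, p.2, rfl, ha, h1, h2, hσ⟩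
  rw [monInt, hset, Set.ncard_coe_finset, Finset.card_image_of_injOn]
  intro p hp p' hp' hpe
  simp only [Finset.mem_coe, Finset.mem_filter, OEdges, Finset.mem_product] at hp hp'
  rw [Sym2.mk_eq_mk_iff] at hpe
  rcases hpe with h | h
  · exact Prod.ext (congrArg Prod.fst h) (congrArg Prod.snd h)
  · exfalso
    have h1 : p.1 = p'.2 := congrArg Prod.fst h
    have h2 : p.2 = p'.1 := congrArg Prod.snd h
    rw [h1, h2] at hp
    exact lex_asymm hp.1.2.2 hp'.1.2.2

/-- The boundary edges of `R`, as (outside, inside) pairs. -/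
def BdryPairs (R : Finset V) : Finset (V × V) :=
  R.biUnion (fun v => ((nbrs v).filter (fun u => u ∉ R)).image (fun u => (u, v)))

lemma mem_BdryPairs {R : Finset V} {p : V × V} :
    p ∈ BdryPairs R ↔ IsBdryEdge R p.1 p.2 := by
  simp only [BdryPairs, Finset.mem_biUnion, Finset.mem_image, Finset.mem_filter,
    IsBdryEdge]
  constructor
  · rintro ⟨v, hv, u, ⟨hu, huR⟩, rfl⟩
    exact ⟨huR, hv, adj_symm (mem_nbrs.1 hu)⟩
  · rintro ⟨h1, h2, h3⟩
    exact ⟨p.2, h2, p.1, ⟨mem_nbrs.2 (adj_symm h3), h1⟩, rfl⟩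

lemma ncard_bdry_filter (R : Finset V) (P : V × V → Prop) :
    Set.ncard {p : V × V | IsBdryEdge R p.1 p.2 ∧ P p}
      = ((BdryPairs R).filter P).card := by
  rw [← Set.ncard_coe_finset]
  congr 1
  ext p
  simp only [Set.mem_setOf_eq, Finset.coe_filter, mem_BdryPairs]

variable {q : ℕ}

/-- The configurations on `R`, as a finset. -/
def CF (q : ℕ) (R : Finset V) : Finset (V → ℕ) :=
  (R.pi (fun _ => Finset.Icc 1 q)).image (fun g v => if h : v ∈ R then g v h else 0)

lemma configs_eq_CF (R : Finset V) : Configs q R = ↑(CF q R) := by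
  ext σ
  simp only [Configs, Set.mem_setOf_eq, CF, Finset.coe_image, Set.mem_image,
    Finset.mem_coe, Finset.mem_pi, Finset.mem_Icc]
  constructor
  · rintro ⟨h1, h2⟩
    refine ⟨fun v _ => σ v, fun v hv => h1 v hv, ?_⟩
    funext v
    by_cases h : v ∈ R
    · simp [h]
    · simp [h, h2 v h]
  · rintro ⟨g, hg, rfl⟩
    constructor
    · intro v hv; simpa [hv] using hg v hv
    · intro v hv; simp [hv]

lemma mem_CF {R : Finset V} {σ : V → ℕ} :
    σ ∈ CF q R ↔ (∀ v ∈ R, 1 ≤ σ v ∧ σ v ≤ q) ∧ ∀ v ∉ R, σ v = 0 := by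
  rw [← Finset.mem_coe, ← configs_eq_CF]; rfl

lemma finsum_configs {R : Finset V} (F : (V → ℕ) → ℝ) :
    ∑ᶠ σ ∈ Configs q R, F σ = ∑ σ ∈ CF q R, F σ := by
  rw [configs_eq_CF, finsum_mem_coe_finset]

lemma update_mem_CF {R : Finset V} {σ : V → ℕ} (hσ : σ ∈ CF q R) {f : V} (hf : f ∈ R)
    {j : ℕ} (hj1 : 1 ≤ j) (hjq : j ≤ q) : Function.update σ f j ∈ CF q R := by
  rw [mem_CF] at hσ ⊢
  constructor
  · intro v hv
    by_cases h : v = f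
    · subst h; simp [hj1, hjq]
    · rw [Function.update_of_ne h]; exact hσ.1 v hv
  · intro v hv
    rw [Function.update_of_ne (fun h => hv (by rw [h]; exact hf))]
    exact hσ.2 v hv

variable {X : BoundaryPair q}

/-- `monExS` as a finset computation. -/
lemma monExS_eq (X : BoundaryPair q) (σ : V → ℕ) :
    monExS X σ = ((OEdges X.R).filter (fun p => σ p.1 = σ p.2)).card
      + ((BdryPairs X.R).filter (fun p => p ≠ (X.w, X.f) ∧ 1 ≤ X.B p ∧ X.B p = σ p.2)).card := by
  rw [monExS, monInt_eq, ncard_bdry_filter]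
  congr!

lemma wf_mem_BdryPairs (X : BoundaryPair q) : ((X.w, X.f) : V × V) ∈ BdryPairs X.R :=
  mem_BdryPairs.2 ⟨X.hw, X.hf, X.hadj⟩

lemma bdryset_finite (R : Finset V) (P : V × V → Prop) :
    {p : V × V | IsBdryEdge R p.1 p.2 ∧ P p}.Finite := by
  apply Set.Finite.subset (BdryPairs R).finite_toSet
  intro p hp
  exact mem_BdryPairs.2 hp.1

/-- Generic splitting of the boundary count. -/
lemma bdry_count_split (X : BoundaryPair q) (Bc : V × V → ℕ) (σ : V → ℕ)
    (hs1 : 1 ≤ Bc (X.w, X.f)) :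
    Set.ncard {p : V × V | IsBdryEdge X.R p.1 p.2 ∧ 1 ≤ Bc p ∧ Bc p = σ p.2}
      = Set.ncard {p : V × V | IsBdryEdge X.R p.1 p.2 ∧ p ≠ (X.w, X.f) ∧ 1 ≤ Bc p ∧ Bc p = σ p.2}
        + (if Bc (X.w, X.f) = σ X.f then 1 else 0) := by
  by_cases hmono : Bc (X.w, X.f) = σ X.f
  · rw [if_pos hmono]
    have hkey : {p : V × V | IsBdryEdge X.R p.1 p.2 ∧ 1 ≤ Bc p ∧ Bc p = σ p.2}
        = insert ((X.w, X.f) : V × V)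
            {p : V × V | IsBdryEdge X.R p.1 p.2 ∧ p ≠ (X.w, X.f) ∧ 1 ≤ Bc p ∧ Bc p = σ p.2} := by
      ext p
      simp only [Set.mem_setOf_eq, Set.mem_insert_iff]
      constructor
      · intro h
        by_cases hp : p = (X.w, X.f)
        · exact Or.inl hp
        · exact Or.inr ⟨h.1, hp, h.2⟩
      · rintro (rfl | ⟨h1, _, h2⟩)
        · exact ⟨⟨X.hw, X.hf, X.hadj⟩, hs1, hmono⟩
        · exact ⟨h1, h2⟩
    rw [hkey, Set.ncard_insert_of_notMem (by simp) (bdryset_finite _ _)]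
  · rw [if_neg hmono, add_zero]
    congr 1
    ext p
    simp only [Set.mem_setOf_eq]
    constructor
    · intro h
      refine ⟨h.1, ?_, h.2⟩
      rintro rfl
      exact hmono h.2.2
    · rintro ⟨h1, _, h2⟩
      exact ⟨h1, h2⟩

/-- `monFull` with `X.B` counts `monExS` plus the edge `s` if monochromatic. -/
lemma monFull_B_eq (X : BoundaryPair q) (σ : V → ℕ) :
    monFull X X.B σ = monExS X σ + (if X.B (X.w, X.f) = σ X.f then 1 else 0) := by
  rw [monFull, monExS, add_assoc]
  congr 1
  exact bdry_count_split X X.B σ X.hBs.1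

/-- `monFull` with `X.B'` counts `monExS` plus the edge `s` if monochromatic. -/
lemma monFull_B'_eq (X : BoundaryPair q) (σ : V → ℕ) :
    monFull X X.B' σ = monExS X σ + (if X.B' (X.w, X.f) = σ X.f then 1 else 0) := by
  rw [monFull, monExS, add_assoc]
  congr 1
  rw [bdry_count_split X X.B' σ X.hB's.1]
  congr 2
  ext p
  simp only [Set.mem_setOf_eq]
  constructor
  · rintro ⟨hb, hne, h⟩
    have hB := X.hagree p.1 p.2 hb (by rw [Prod.mk.eta]; exact hne)
    rw [Prod.mk.eta] at hB
    exact ⟨hb, hne, by rw [hB]; exact h⟩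
  · rintro ⟨hb, hne, h⟩
    have hB := X.hagree p.1 p.2 hb (by rw [Prod.mk.eta]; exact hne)
    rw [Prod.mk.eta] at hB
    exact ⟨hb, hne, by rw [← hB]; exact h⟩

lemma ci_eq (X : BoundaryPair q) (lam : ℝ) (i : ℕ) :
    ci X lam i = ∑ σ ∈ (CF q X.R).filter (fun σ => σ X.f = i), lam ^ monExS X σ := by
  rw [ci]
  rw [show {σ ∈ Configs q X.R | σ X.f = i}
      = ↑((CF q X.R).filter (fun σ => σ X.f = i)) by
    rw [configs_eq_CF]; ext σ; simp]
  rw [finsum_mem_coe_finset]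

/-- The spin seen at a vertex `y` adjacent to `f` (from inside `R` or from `B`). -/
def spinAt (X : BoundaryPair q) (σ : V → ℕ) (y : V) : ℕ :=
  if y ∈ X.R then σ y else X.B (y, X.f)

/-- The number of neighbours of `f` other than `w` showing spin `j`. -/
def matchCount (X : BoundaryPair q) (σ : V → ℕ) (j : ℕ) : ℕ :=
  (((nbrs X.f).erase X.w).filter (fun y => spinAt X σ y = j)).card

lemma w_mem_nbrs_f (X : BoundaryPair q) : X.w ∈ nbrs X.f :=
  mem_nbrs.2 (adj_symm X.hadj)

lemma card_T (X : BoundaryPair q) : ((nbrs X.f).erase X.w).card = 3 := by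
  rw [Finset.card_erase_of_mem (w_mem_nbrs_f X), card_nbrs]

/-- Claim B: the total number of matches over a set of spins is at most 3. -/
lemma sum_matchCount_le (X : BoundaryPair q) (σ : V → ℕ) (J : Finset ℕ) :
    ∑ j ∈ J, matchCount X σ j ≤ 3 := by
  rw [show ∑ j ∈ J, matchCount X σ j
      = (J.biUnion (fun j => ((nbrs X.f).erase X.w).filter (fun y => spinAt X σ y = j))).card by
    rw [Finset.card_biUnion]
    · rfl
    · intro j hj j' hj' hne
      rw [Function.onFun, Finset.disjoint_left]
      intro y hy hy'
      rw [Finset.mem_filter] at hy hy'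
      exact hne (hy.2 ▸ hy'.2 ▸ rfl)]
  calc _ ≤ ((nbrs X.f).erase X.w).card := by
          apply Finset.card_le_card
          intro y hy
          rw [Finset.mem_biUnion] at hy
          obtain ⟨j, _, hy⟩ := hy
          exact (Finset.mem_filter.1 hy).1
    _ = 3 := card_T X

/-- Claim A: recolouring `f` to `j` increases the weight count by at most the matches. -/
lemma monExS_update_le (X : BoundaryPair q) (σ : V → ℕ) (j : ℕ) :
    monExS X (Function.update σ X.f j) ≤ monExS X σ + matchCount X σ j := by
  set τ := Function.update σ X.f j with hτ
  have hτf : τ X.f = j := by rw [hτ, Function.update_self]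
  have hτne : ∀ v, v ≠ X.f → τ v = σ v := fun v hv => Function.update_of_ne hv _ _
  -- the two target sets
  set A : Finset V := ((nbrs X.f).erase X.w).filter (fun y => y ∈ X.R ∧ σ y = j) with hA
  set A' : Finset V := ((nbrs X.f).erase X.w).filter (fun y => y ∉ X.R ∧ X.B (y, X.f) = j) with hA'
  -- internal edge count
  have hInt : ((OEdges X.R).filter (fun p => τ p.1 = τ p.2)).card
      ≤ ((OEdges X.R).filter (fun p => σ p.1 = σ p.2)).card + A.card := by
    have hsplit := Finset.card_filter_add_card_filter_not
      (s := (OEdges X.R).filter (fun p => τ p.1 = τ p.2))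
      (p := fun p => p.1 = X.f ∨ p.2 = X.f)
    rw [← hsplit]
    have h1 : (((OEdges X.R).filter (fun p => τ p.1 = τ p.2)).filter
          (fun p => ¬ (p.1 = X.f ∨ p.2 = X.f))).card
        ≤ ((OEdges X.R).filter (fun p => σ p.1 = σ p.2)).card := by
      apply Finset.card_le_card
      intro p hp
      simp only [Finset.mem_filter] at hp ⊢
      push_neg at hp
      refine ⟨hp.1.1, ?_⟩
      rw [← hτne p.1 hp.2.1, ← hτne p.2 hp.2.2]
      exact hp.1.2
    have h2 : (((OEdges X.R).filter (fun p => τ p.1 = τ p.2)).filter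
          (fun p => p.1 = X.f ∨ p.2 = X.f)).card ≤ A.card := by
      apply Finset.card_le_card_of_injOn (fun p => if p.1 = X.f then p.2 else p.1)
      · intro p hp
        simp only [Finset.mem_coe, Finset.mem_filter, OEdges, Finset.mem_product] at hp
        obtain ⟨⟨⟨⟨h1R, h2R⟩, hadj, hlex⟩, hmono⟩, htouch⟩ := hp
        have hne12 := adj_ne hadj
        rcases htouch with hpf | hpf
        · have hp2 : p.2 ≠ X.f := fun h => hne12 (hpf.trans h.symm)
          dsimp only
          rw [if_pos hpf]
          rw [hA]
          simp only [Finset.mem_coe, Finset.mem_filter, Finset.mem_erase]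
          have hσ2 : σ p.2 = j := by
            rw [← hτne p.2 hp2, ← hmono, hpf, hτf]
          refine ⟨⟨fun h => X.hw (h ▸ h2R), mem_nbrs.2 (hpf ▸ hadj)⟩, h2R, hσ2⟩
        · have hp1 : p.1 ≠ X.f := fun h => hne12 (h.trans hpf.symm)
          dsimp only
          rw [if_neg hp1]
          rw [hA]
          simp only [Finset.mem_coe, Finset.mem_filter, Finset.mem_erase]
          have hσ1 : σ p.1 = j := by
            rw [← hτne p.1 hp1, hmono, hpf, hτf]
          refine ⟨⟨fun h => X.hw (h ▸ h1R), mem_nbrs.2 (adj_symm (hpf ▸ hadj))⟩, h1R, hσ1⟩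
      · intro p hp p' hp' heq
        dsimp only at heq
        simp only [Finset.coe_filter, Set.mem_setOf_eq, Finset.mem_filter, OEdges,
          Finset.mem_product] at hp hp'
        obtain ⟨⟨⟨_, hadj, hlex⟩, _⟩, htouch⟩ := hp
        obtain ⟨⟨⟨_, hadj', hlex'⟩, _⟩, htouch'⟩ := hp'
        have hne12 := adj_ne hadj
        have hne12' := adj_ne hadj'
        rcases htouch with h1 | h1 <;> rcases htouch' with h2 | h2
        · rw [if_pos h1, if_pos h2] at heq
          exact Prod.ext (h1.trans h2.symm) heq
        · have hp'1 : p'.1 ≠ X.f := fun h => hne12' (h.trans h2.symm)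
          rw [if_pos h1, if_neg hp'1] at heq
          -- p = (f, y), p' = (y, f), lex both ways: contradiction
          exfalso
          rw [h1] at hlex
          rw [h2] at hlex'
          rw [heq] at hlex
          exact lex_asymm hlex hlex'
        · have hp1 : p.1 ≠ X.f := fun h => hne12 (h.trans h1.symm)
          rw [if_neg hp1, if_pos h2] at heq
          exfalso
          rw [h1] at hlex
          rw [h2] at hlex'
          rw [heq] at hlex
          exact lex_asymm hlex hlex'
        · have hp1 : p.1 ≠ X.f := fun h => hne12 (h.trans h1.symm)
          have hp'1 : p'.1 ≠ X.f := fun h => hne12' (h.trans h2.symm)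
          rw [if_neg hp1, if_neg hp'1] at heq
          exact Prod.ext heq (h1.trans h2.symm)
    omega
  -- boundary edge count
  have hBd : ((BdryPairs X.R).filter
        (fun p => p ≠ (X.w, X.f) ∧ 1 ≤ X.B p ∧ X.B p = τ p.2)).card
      ≤ ((BdryPairs X.R).filter
        (fun p => p ≠ (X.w, X.f) ∧ 1 ≤ X.B p ∧ X.B p = σ p.2)).card + A'.card := by
    have hsplit := Finset.card_filter_add_card_filter_not
      (s := (BdryPairs X.R).filter (fun p => p ≠ (X.w, X.f) ∧ 1 ≤ X.B p ∧ X.B p = τ p.2))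
      (p := fun p => p.2 = X.f)
    rw [← hsplit]
    have h1 : (((BdryPairs X.R).filter
          (fun p => p ≠ (X.w, X.f) ∧ 1 ≤ X.B p ∧ X.B p = τ p.2)).filter
          (fun p => ¬ p.2 = X.f)).card
        ≤ ((BdryPairs X.R).filter
          (fun p => p ≠ (X.w, X.f) ∧ 1 ≤ X.B p ∧ X.B p = σ p.2)).card := by
      apply Finset.card_le_card
      intro p hp
      simp only [Finset.mem_filter] at hp ⊢
      exact ⟨hp.1.1, hp.1.2.1, hp.1.2.2.1, by rw [← hτne p.2 hp.2]; exact hp.1.2.2.2⟩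
    have h2 : (((BdryPairs X.R).filter
          (fun p => p ≠ (X.w, X.f) ∧ 1 ≤ X.B p ∧ X.B p = τ p.2)).filter
          (fun p => p.2 = X.f)).card ≤ A'.card := by
      apply Finset.card_le_card_of_injOn (fun p => p.1)
      · intro p hp
        simp only [Finset.mem_coe, Finset.mem_filter] at hp
        obtain ⟨⟨hbd, hne, hB1, hBτ⟩, hp2⟩ := hp
        have hbd' := mem_BdryPairs.1 hbd
        have hpe : p = (p.1, X.f) := by rw [← hp2]
        rw [hA']
        simp only [Finset.mem_coe, Finset.mem_filter, Finset.mem_erase]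
        have hw1 : p.1 ≠ X.w := by
          intro h
          exact hne (by rw [hpe, h])
        have hBj : X.B (p.1, X.f) = j := by
          rw [← hpe, hBτ, hp2, hτf]
        exact ⟨⟨hw1, mem_nbrs.2 (adj_symm (hp2 ▸ hbd'.2.2))⟩, hbd'.1, hBj⟩
      · intro p hp p' hp' heq
        simp only [Finset.coe_filter, Set.mem_setOf_eq, Finset.mem_filter] at hp hp'
        have e1 : p = (p.1, X.f) := by rw [← hp.2]
        have e2 : p' = (p'.1, X.f) := by rw [← hp'.2]
        dsimp only at heq
        rw [e1, e2, heq]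
    omega
  -- combine
  have hAA' : A.card + A'.card ≤ matchCount X σ j := by
    rw [matchCount]
    rw [← Finset.card_union_of_disjoint]
    · apply Finset.card_le_card
      intro y hy
      rw [Finset.mem_union, hA, hA'] at hy
      simp only [Finset.mem_filter] at hy ⊢
      rcases hy with ⟨h1, h2, h3⟩ | ⟨h1, h2, h3⟩
      · exact ⟨h1, by rw [spinAt, if_pos h2]; exact h3⟩
      · exact ⟨h1, by rw [spinAt, if_neg h2]; exact h3⟩
    · rw [Finset.disjoint_left]
      intro y hy hy'
      rw [hA, Finset.mem_filter] at hy
      rw [hA', Finset.mem_filter] at hy'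
      exact hy'.2.1 hy.2.1
  rw [monExS_eq, monExS_eq]
  omega

/-- Tangent-line bound: `λ^n ≥ λ^u + (n − u)(λ^{u+1} − λ^u)` for `0 < λ ≤ 1`. -/
lemma pow_tangent {lam : ℝ} (hlam0 : 0 < lam) (hlam1 : lam ≤ 1) (u n : ℕ) :
    lam ^ u + ((n : ℝ) - u) * (lam ^ (u + 1) - lam ^ u) ≤ lam ^ n := by
  rcases le_or_gt n u with h | h
  · -- n ≤ u
    obtain ⟨d, rfl⟩ := Nat.exists_eq_add_of_le h
    have key : ∀ d : ℕ, lam ^ d * (1 + d * (1 - lam)) ≤ 1 := by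
      intro d
      induction d with
      | zero => simp
      | succ d ih =>
        calc lam ^ (d + 1) * (1 + (d + 1 : ℕ) * (1 - lam))
            ≤ lam ^ d * (1 + d * (1 - lam)) := by
              rw [pow_succ]
              have step : lam * (1 + ((d:ℝ) + 1) * (1 - lam)) ≤ 1 + d * (1 - lam) := by
                nlinarith [sq_nonneg (1 - lam), Nat.cast_nonneg (α := ℝ) d]
              calc lam ^ d * lam * (1 + ((d : ℕ) + 1 : ℕ) * (1 - lam))
                  = lam ^ d * (lam * (1 + ((d:ℝ) + 1) * (1 - lam))) := by push_cast; ring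
                _ ≤ lam ^ d * (1 + d * (1 - lam)) := by
                    apply mul_le_mul_of_nonneg_left step (pow_nonneg hlam0.le d)
          _ ≤ 1 := ih
    have hkey := key d
    have hpow : lam ^ n * lam ^ d = lam ^ (n + d) := by rw [← pow_add]
    have h2 : lam ^ (n + d) * (1 + d * (1 - lam)) ≤ lam ^ n := by
      calc lam ^ (n + d) * (1 + d * (1 - lam)) = lam ^ n * (lam ^ d * (1 + d * (1 - lam))) := by
            rw [pow_add]; ring
        _ ≤ lam ^ n * 1 := mul_le_mul_of_nonneg_left hkey (pow_nonneg hlam0.le n)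
        _ = lam ^ n := mul_one _
    have hcast : ((n : ℝ) - (n + d : ℕ)) * (lam ^ (n + d + 1) - lam ^ (n + d))
        = d * (lam ^ (n + d) - lam ^ (n + d + 1)) := by push_cast; ring
    -- goal with u := n + d
    have : lam ^ (n + d) + ((n : ℝ) - (n + d : ℕ)) * (lam ^ (n + d + 1) - lam ^ (n + d))
        = lam ^ (n + d) * (1 + d * (1 - lam)) := by
      push_cast
      rw [pow_succ]
      ring
    rw [this]
    exact h2
  · -- u + 1 ≤ n
    obtain ⟨d, rfl⟩ : ∃ d : ℕ, n = u + 1 + d := ⟨n - (u + 1), by omega⟩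
    have hb : 1 + ((d : ℝ) + 1) * (lam - 1) ≤ lam ^ (d + 1) := by
      have := one_add_mul_le_pow (a := lam - 1) (by nlinarith) (d + 1)
      calc 1 + ((d : ℝ) + 1) * (lam - 1) = 1 + ((d + 1 : ℕ) : ℝ) * (lam - 1) := by push_cast; ring
        _ ≤ (1 + (lam - 1)) ^ (d + 1) := this
        _ = lam ^ (d + 1) := by norm_num
    have expand : lam ^ u + ((u + 1 + d : ℕ) - (u : ℝ)) * (lam ^ (u + 1) - lam ^ u)
        = lam ^ u * (1 + ((d : ℝ) + 1) * (lam - 1)) := by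
      push_cast
      rw [pow_succ]
      ring
    rw [expand, show u + 1 + d = u + (d + 1) by omega, pow_add]
    exact mul_le_mul_of_nonneg_left hb (pow_nonneg hlam0.le u)

/-- The convexity bound for distributing at most 3 extra edges over `m` spins. -/
lemma convex_bound {lam : ℝ} (hlam0 : 0 < lam) (hlam1 : lam ≤ 1)
    (J : Finset ℕ) (e : ℕ → ℕ) {m : ℕ} (hm : J.card = m) (h1 : 1 ≤ m)
    (hsum : ∑ j ∈ J, e j ≤ 3) :
    ((3 % m : ℕ) : ℝ) * lam ^ (3 / m + 1) + ((m - 3 % m : ℕ) : ℝ) * lam ^ (3 / m)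
      ≤ ∑ j ∈ J, lam ^ (e j) := by
  set u := 3 / m with hu
  set v := 3 % m with hv
  have hvm : v < m := Nat.mod_lt _ h1
  have hdm : m * u + v = 3 := by rw [hu, hv]; exact Nat.div_add_mod 3 m
  have hstep : ∀ j ∈ J, lam ^ u + ((e j : ℝ) - u) * (lam ^ (u + 1) - lam ^ u) ≤ lam ^ (e j) :=
    fun j _ => pow_tangent hlam0 hlam1 u (e j)
  have hsum2 : ∑ j ∈ J, (lam ^ u + ((e j : ℝ) - u) * (lam ^ (u + 1) - lam ^ u))
      ≤ ∑ j ∈ J, lam ^ (e j) := Finset.sum_le_sum hstep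
  refine le_trans ?_ hsum2
  rw [Finset.sum_add_distrib, Finset.sum_const, hm, ← Finset.sum_mul]
  have hse : ∑ j ∈ J, ((e j : ℝ) - u) = (∑ j ∈ J, (e j : ℕ) : ℕ) - (m : ℝ) * u := by
    rw [Finset.sum_sub_distrib, Finset.sum_const, hm]
    push_cast
    ring
  rw [hse]
  have hneg : lam ^ (u + 1) - lam ^ u ≤ 0 := by
    have : lam ^ (u + 1) ≤ lam ^ u := pow_le_pow_of_le_one hlam0.le hlam1 (by omega)
    linarith
  have hmono : ((∑ j ∈ J, e j : ℕ) - (m : ℝ) * u) * (lam ^ (u + 1) - lam ^ u)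
      ≥ ((3 : ℝ) - (m : ℝ) * u) * (lam ^ (u + 1) - lam ^ u) := by
    apply mul_le_mul_of_nonpos_right _ hneg
    have : ((∑ j ∈ J, e j : ℕ) : ℝ) ≤ 3 := by exact_mod_cast hsum
    linarith
  have h3 : (3 : ℝ) - (m : ℝ) * u = (v : ℝ) := by
    have hc : ((m * u + v : ℕ) : ℝ) = 3 := by rw [hdm]; norm_num
    push_cast at hc
    linarith
  have hmv : ((m - v : ℕ) : ℝ) = (m : ℝ) - v := by
    push_cast [Nat.cast_sub hvm.le]
    ring
  have hgoal : ((v : ℕ) : ℝ) * lam ^ (u + 1) + ((m : ℝ) - v) * lam ^ u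
      = (m : ℝ) * lam ^ u + ((3 : ℝ) - (m : ℝ) * u) * (lam ^ (u + 1) - lam ^ u) := by
    rw [← h3]; ring
  rw [nsmul_eq_mul, hmv, hgoal]
  linarith [hmono]

lemma ci_nonneg (X : BoundaryPair q) {lam : ℝ} (hlam0 : 0 ≤ lam) (i : ℕ) :
    0 ≤ ci X lam i := by
  rw [ci_eq]
  exact Finset.sum_nonneg (fun σ _ => pow_nonneg hlam0 _)

lemma ci_pos (X : BoundaryPair q) {lam : ℝ} (hlam0 : 0 < lam) {i : ℕ}
    (h1 : 1 ≤ i) (hiq : i ≤ q) : 0 < ci X lam i := by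
  rw [ci_eq]
  apply Finset.sum_pos (fun σ _ => pow_pos hlam0 _)
  refine ⟨fun v => if v ∈ X.R then i else 0, ?_⟩
  rw [Finset.mem_filter, mem_CF]
  refine ⟨⟨fun v hv => by simp [hv, h1, hiq], fun v hv => by simp [hv]⟩, by simp [X.hf]⟩

lemma ci_update_ge (X : BoundaryPair q) {lam : ℝ} (hlam0 : 0 < lam) (hlam1 : lam ≤ 1)
    {j : ℕ} (hj1 : 1 ≤ j) (hjq : j ≤ q) (b : ℕ) :
    ∑ σ ∈ (CF q X.R).filter (fun σ => σ X.f = b),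
        lam ^ monExS X σ * lam ^ matchCount X σ j ≤ ci X lam j := by
  rw [ci_eq]
  calc ∑ σ ∈ (CF q X.R).filter (fun σ => σ X.f = b),
        lam ^ monExS X σ * lam ^ matchCount X σ j
      ≤ ∑ σ ∈ (CF q X.R).filter (fun σ => σ X.f = b),
          lam ^ monExS X (Function.update σ X.f j) := by
        apply Finset.sum_le_sum
        intro σ _
        rw [← pow_add]
        exact pow_le_pow_of_le_one hlam0.le hlam1 (monExS_update_le X σ j)
    _ = ∑ τ ∈ ((CF q X.R).filter (fun σ => σ X.f = b)).image
          (fun σ => Function.update σ X.f j), lam ^ monExS X τ := by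
        rw [Finset.sum_image]
        intro σ hσ σ' hσ' h
        rw [Finset.mem_coe, Finset.mem_filter] at hσ hσ'
        funext v
        by_cases hv : v = X.f
        · rw [hv, hσ.2, hσ'.2]
        · have := congrFun h v
          dsimp only at this
          rwa [Function.update_of_ne hv, Function.update_of_ne hv] at this
    _ ≤ ∑ τ ∈ (CF q X.R).filter (fun σ => σ X.f = j), lam ^ monExS X τ := by
        apply Finset.sum_le_sum_of_subset_of_nonneg
        · intro τ hτ
          rw [Finset.mem_image] at hτ
          obtain ⟨σ, hσ, rfl⟩ := hτ
          rw [Finset.mem_filter] at hσ ⊢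
          exact ⟨update_mem_CF hσ.1 X.hf hj1 hjq, Function.update_self _ _ _⟩
        · intro τ _ _
          exact pow_nonneg hlam0.le _

/-- The key lower bound on `cOut` in terms of `ci`. -/
lemma cOut_ge (X : BoundaryPair q) {lam : ℝ} (hlam0 : 0 < lam) (hlam1 : lam ≤ 1)
    (hq3 : 3 ≤ q) (hne : X.B (X.w, X.f) ≠ X.B' (X.w, X.f)) (b : ℕ) :
    (((3 % (q - 2) : ℕ) : ℝ) * lam ^ (3 / (q - 2) + 1)
        + ((q - 2 - 3 % (q - 2) : ℕ) : ℝ) * lam ^ (3 / (q - 2))) * ci X lam b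
      ≤ cOut X lam := by
  set bB := X.B (X.w, X.f) with hbB
  set bB' := X.B' (X.w, X.f) with hbB'
  set J := (Finset.Icc 1 q).filter (fun i => i ≠ bB ∧ i ≠ bB') with hJ
  have hJcard : J.card = q - 2 := by
    have : J = ((Finset.Icc 1 q).erase bB).erase bB' := by
      ext i
      simp only [hJ, Finset.mem_filter, Finset.mem_erase]
      tauto
    rw [this, Finset.card_erase_of_mem, Finset.card_erase_of_mem, Nat.card_Icc]
    · omega
    · rw [Finset.mem_Icc]; exact ⟨X.hBs.1, X.hBs.2⟩
    · rw [Finset.mem_erase, Finset.mem_Icc]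
      exact ⟨fun h => hne (h.symm), X.hB's.1, X.hB's.2⟩
  have hm1 : 1 ≤ q - 2 := by omega
  rw [cOut]
  calc (((3 % (q - 2) : ℕ) : ℝ) * lam ^ (3 / (q - 2) + 1)
        + ((q - 2 - 3 % (q - 2) : ℕ) : ℝ) * lam ^ (3 / (q - 2))) * ci X lam b
      = ∑ σ ∈ (CF q X.R).filter (fun σ => σ X.f = b),
          lam ^ monExS X σ * (((3 % (q - 2) : ℕ) : ℝ) * lam ^ (3 / (q - 2) + 1)
            + ((q - 2 - 3 % (q - 2) : ℕ) : ℝ) * lam ^ (3 / (q - 2))) := by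
        rw [ci_eq, Finset.mul_sum]
        apply Finset.sum_congr rfl
        intro σ _
        ring
    _ ≤ ∑ σ ∈ (CF q X.R).filter (fun σ => σ X.f = b),
          lam ^ monExS X σ * (∑ j ∈ J, lam ^ matchCount X σ j) := by
        apply Finset.sum_le_sum
        intro σ _
        apply mul_le_mul_of_nonneg_left _ (pow_nonneg hlam0.le _)
        exact convex_bound hlam0 hlam1 J (matchCount X σ) hJcard hm1
          (sum_matchCount_le X σ J)
    _ = ∑ j ∈ J, ∑ σ ∈ (CF q X.R).filter (fun σ => σ X.f = b),
          lam ^ monExS X σ * lam ^ matchCount X σ j := by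
        rw [Finset.sum_comm]
        apply Finset.sum_congr rfl
        intro σ _
        rw [Finset.mul_sum]
    _ ≤ ∑ j ∈ J, ci X lam j := by
        apply Finset.sum_le_sum
        intro j hj
        rw [hJ, Finset.mem_filter, Finset.mem_Icc] at hj
        exact ci_update_ge X hlam0 hlam1 hj.1.1 hj.1.2 b

/-- The final analytic bound. -/
lemma analytic_bound {lam a a' c K : ℝ} (h0 : 0 < lam) (h1 : lam ≤ 1)
    (ha : 0 < a) (ha' : 0 < a') (hc : 0 ≤ c) (hK : 0 ≤ K)
    (hKa : K * a ≤ c) (hKa' : K * a' ≤ c) :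
    a * max (lam / (lam * a + a' + c) - 1 / (a + lam * a' + c)) 0
      + a' * max (1 / (lam * a + a' + c) - lam / (a + lam * a' + c)) 0
      + c * max (1 / (lam * a + a' + c) - 1 / (a + lam * a' + c)) 0
      ≤ (1 - lam) / (1 + lam + K) := by
  set ZB := lam * a + a' + c with hZB
  set ZB' := a + lam * a' + c with hZB'
  have hZBpos : 0 < ZB := by rw [hZB]; nlinarith
  have hZB'pos : 0 < ZB' := by rw [hZB']; nlinarith
  have hden : (0:ℝ) < 1 + lam + K := by nlinarith
  have t1 : max (lam / ZB - 1 / ZB') 0 = 0 := by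
    apply max_eq_right
    rw [sub_nonpos, div_le_div_iff₀ hZBpos hZB'pos]
    rw [hZB, hZB']
    nlinarith [mul_nonneg (mul_nonneg (sub_nonneg.2 h1) (by linarith : (0:ℝ) ≤ 1 + lam)) ha'.le,
      mul_nonneg (sub_nonneg.2 h1) hc]
  have t2 : max (1 / ZB - lam / ZB') 0 = 1 / ZB - lam / ZB' := by
    apply max_eq_left
    rw [sub_nonneg, div_le_div_iff₀ hZB'pos hZBpos]
    rw [hZB, hZB']
    nlinarith [mul_nonneg (mul_nonneg (sub_nonneg.2 h1) (by linarith : (0:ℝ) ≤ 1 + lam)) ha.le,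
      mul_nonneg (sub_nonneg.2 h1) hc]
  have step1 : ((1 + lam) * a + c) * ((1 + lam) * a' + c) ≤ ZB * ZB' := by
    rw [hZB, hZB']
    nlinarith [mul_nonneg h0.le (sq_nonneg (a - a'))]
  rw [t1, t2, mul_zero, zero_add]
  rcases le_total a' a with hord | hord
  · -- a' ≤ a : third max is 1/ZB − 1/ZB'
    have t3 : max (1 / ZB - 1 / ZB') 0 = 1 / ZB - 1 / ZB' := by
      apply max_eq_left
      rw [sub_nonneg, div_le_div_iff₀ hZB'pos hZBpos]
      rw [hZB, hZB']
      nlinarith [mul_nonneg (sub_nonneg.2 h1) (sub_nonneg.2 hord)]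
    rw [t3]
    have key : a' * (1 / ZB - lam / ZB') + c * (1 / ZB - 1 / ZB')
        = (1 - lam) * a * ((1 + lam) * a' + c) / (ZB * ZB') := by
      field_simp
      ring
    rw [key, div_le_div_iff₀ (by positivity) hden]
    have step2 : (1 + lam + K) * a ≤ (1 + lam) * a + c := by nlinarith
    calc (1 - lam) * a * ((1 + lam) * a' + c) * (1 + lam + K)
        = (1 - lam) * (((1 + lam) * a' + c) * ((1 + lam + K) * a)) := by ring
      _ ≤ (1 - lam) * (((1 + lam) * a' + c) * (((1 + lam) * a + c))) := by
          apply mul_le_mul_of_nonneg_left _ (by linarith)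
          apply mul_le_mul_of_nonneg_left step2 (by nlinarith)
      _ = (1 - lam) * (((1 + lam) * a + c) * ((1 + lam) * a' + c)) := by ring
      _ ≤ (1 - lam) * (ZB * ZB') := by
          apply mul_le_mul_of_nonneg_left step1 (by linarith)
  · -- a ≤ a' : third max is 0
    have t3 : max (1 / ZB - 1 / ZB') 0 = 0 := by
      apply max_eq_right
      rw [sub_nonpos, div_le_div_iff₀ hZBpos hZB'pos]
      rw [hZB, hZB']
      nlinarith [mul_nonneg (sub_nonneg.2 h1) (sub_nonneg.2 hord)]
    rw [t3, mul_zero, add_zero]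
    have key : a' * (1 / ZB - lam / ZB')
        = (1 - lam) * a' * ((1 + lam) * a + c) / (ZB * ZB') := by
      field_simp
      ring
    rw [key, div_le_div_iff₀ (by positivity) hden]
    have step2 : (1 + lam + K) * a' ≤ (1 + lam) * a' + c := by nlinarith
    calc (1 - lam) * a' * ((1 + lam) * a + c) * (1 + lam + K)
        = (1 - lam) * (((1 + lam) * a + c) * ((1 + lam + K) * a')) := by ring
      _ ≤ (1 - lam) * (((1 + lam) * a + c) * (((1 + lam) * a' + c))) := by
          apply mul_le_mul_of_nonneg_left _ (by linarith)
          apply mul_le_mul_of_nonneg_left step2 (by nlinarith)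
      _ = (1 - lam) * (((1 + lam) * a + c) * ((1 + lam) * a' + c)) := by ring
      _ ≤ (1 - lam) * (ZB * ZB') := by
          apply mul_le_mul_of_nonneg_left step1 (by linarith)

lemma CF_nonempty (X : BoundaryPair q) (h1q : 1 ≤ q) : (CF q X.R).Nonempty := by
  refine ⟨fun v => if v ∈ X.R then 1 else 0, ?_⟩
  rw [mem_CF]
  exact ⟨fun v hv => by simp [hv, h1q], fun v hv => by simp [hv]⟩

lemma Zbp_eq (X : BoundaryPair q) (lam : ℝ) (Bc : V × V → ℕ) :
    Zbp X lam Bc = ∑ σ ∈ CF q X.R, lam ^ monFull X Bc σ := by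
  rw [Zbp, finsum_configs]

lemma Zbp_pos (X : BoundaryPair q) {lam : ℝ} (hlam0 : 0 < lam) (h1q : 1 ≤ q)
    (Bc : V × V → ℕ) : 0 < Zbp X lam Bc := by
  rw [Zbp_eq]
  exact Finset.sum_pos (fun σ _ => pow_pos hlam0 _) (CF_nonempty X h1q)

lemma gibbsbp_nonneg (X : BoundaryPair q) {lam : ℝ} (hlam0 : 0 < lam) (h1q : 1 ≤ q)
    (Bc : V × V → ℕ) (σ : V → ℕ) : 0 ≤ gibbsbp X lam Bc σ :=
  div_nonneg (pow_nonneg hlam0.le _) (Zbp_pos X hlam0 h1q Bc).le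

lemma sum_gibbsbp (X : BoundaryPair q) {lam : ℝ} (hlam0 : 0 < lam) (h1q : 1 ≤ q)
    (Bc : V × V → ℕ) : ∑ σ ∈ CF q X.R, gibbsbp X lam Bc σ = 1 := by
  simp only [gibbsbp]
  rw [← Finset.sum_div, ← Zbp_eq, div_self (Zbp_pos X hlam0 h1q Bc).ne']

/-- Decomposition of a sum over configurations by the spin at `f`. -/
lemma sum_CF_fiber (X : BoundaryPair q) (lam : ℝ) (g : ℕ → ℝ) :
    ∑ σ ∈ CF q X.R, lam ^ monExS X σ * g (σ X.f)
      = ∑ i ∈ Finset.Icc 1 q, ci X lam i * g i := by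
  rw [← Finset.sum_fiberwise_of_maps_to (g := fun σ => σ X.f) (t := Finset.Icc 1 q)
    (fun σ hσ => Finset.mem_Icc.2 ((mem_CF.1 hσ).1 X.f X.hf))]
  apply Finset.sum_congr rfl
  intro i _
  rw [ci_eq, Finset.sum_mul]
  apply Finset.sum_congr rfl
  intro σ hσ
  rw [(Finset.mem_filter.1 hσ).2]

/-- Splitting a sum over `Icc 1 q` into `b`, `b'` and the rest. -/
lemma sum_Icc_split {b b' : ℕ} (hb1 : 1 ≤ b) (hbq : b ≤ q) (hb'1 : 1 ≤ b') (hb'q : b' ≤ q)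
    (hne : b ≠ b') (h : ℕ → ℝ) :
    ∑ i ∈ Finset.Icc 1 q, h i
      = h b + h b' + ∑ i ∈ (Finset.Icc 1 q).filter (fun i => i ≠ b ∧ i ≠ b'), h i := by
  have hins : Finset.Icc 1 q
      = insert b (insert b' ((Finset.Icc 1 q).filter (fun i => i ≠ b ∧ i ≠ b'))) := by
    ext i
    simp only [Finset.mem_insert, Finset.mem_filter, Finset.mem_Icc]
    constructor
    · intro hi
      by_cases h1 : i = b
      · exact Or.inl h1
      · by_cases h2 : i = b'
        · exact Or.inr (Or.inl h2)
        · exact Or.inr (Or.inr ⟨hi, h1, h2⟩)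
    · rintro (rfl | rfl | ⟨hi, _, _⟩)
      · exact ⟨hb1, hbq⟩
      · exact ⟨hb'1, hb'q⟩
      · exact hi
  have hb'notin : b' ∉ (Finset.Icc 1 q).filter (fun i => i ≠ b ∧ i ≠ b') := by
    simp only [Finset.mem_filter]; tauto
  have hbnotin : b ∉ insert b' ((Finset.Icc 1 q).filter (fun i => i ≠ b ∧ i ≠ b')) := by
    simp only [Finset.mem_insert, Finset.mem_filter]; tauto
  conv_lhs => rw [hins]
  rw [Finset.sum_insert hbnotin, Finset.sum_insert hb'notin]
  ring

/-- `gibbsbp` with `X.B` in factored form. -/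
lemma gibbsbp_B_eq (X : BoundaryPair q) (lam : ℝ) (σ : V → ℕ) :
    gibbsbp X lam X.B σ = lam ^ monExS X σ *
      ((if X.B (X.w, X.f) = σ X.f then lam else 1) / Zbp X lam X.B) := by
  rw [gibbsbp, monFull_B_eq, pow_add]
  by_cases h : X.B (X.w, X.f) = σ X.f
  · rw [if_pos h, if_pos h, pow_one, mul_div_assoc]
  · rw [if_neg h, if_neg h, pow_zero, mul_div_assoc]

lemma gibbsbp_B'_eq (X : BoundaryPair q) (lam : ℝ) (σ : V → ℕ) :
    gibbsbp X lam X.B' σ = lam ^ monExS X σ *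
      ((if X.B' (X.w, X.f) = σ X.f then lam else 1) / Zbp X lam X.B') := by
  rw [gibbsbp, monFull_B'_eq, pow_add]
  by_cases h : X.B' (X.w, X.f) = σ X.f
  · rw [if_pos h, if_pos h, pow_one, mul_div_assoc]
  · rw [if_neg h, if_neg h, pow_zero, mul_div_assoc]

/-- The partition function in terms of `ci`. -/
lemma Zbp_B_eq (X : BoundaryPair q) (lam : ℝ) (hne : X.B (X.w, X.f) ≠ X.B' (X.w, X.f)) :
    Zbp X lam X.B = lam * ci X lam (X.B (X.w, X.f)) + ci X lam (X.B' (X.w, X.f))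
      + cOut X lam := by
  rw [Zbp_eq]
  have : ∀ σ ∈ CF q X.R, (lam : ℝ) ^ monFull X X.B σ
      = lam ^ monExS X σ * (if X.B (X.w, X.f) = σ X.f then lam else 1) := by
    intro σ _
    rw [monFull_B_eq, pow_add]
    by_cases h : X.B (X.w, X.f) = σ X.f
    · rw [if_pos h, if_pos h, pow_one]
    · rw [if_neg h, if_neg h, pow_zero]
  rw [Finset.sum_congr rfl this,
    sum_CF_fiber X lam (fun i => if X.B (X.w, X.f) = i then lam else 1),
    sum_Icc_split X.hBs.1 X.hBs.2 X.hB's.1 X.hB's.2 hne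
      (fun i => ci X lam i * (if X.B (X.w, X.f) = i then lam else 1))]
  rw [if_pos rfl, if_neg hne, cOut]
  have : ∑ i ∈ (Finset.Icc 1 q).filter
      (fun i => i ≠ X.B (X.w, X.f) ∧ i ≠ X.B' (X.w, X.f)),
      ci X lam i * (if X.B (X.w, X.f) = i then lam else 1)
      = ∑ i ∈ (Finset.Icc 1 q).filter
      (fun i => i ≠ X.B (X.w, X.f) ∧ i ≠ X.B' (X.w, X.f)), ci X lam i := by
    apply Finset.sum_congr rfl
    intro i hi
    rw [Finset.mem_filter] at hi
    rw [if_neg (fun h => hi.2.1 h.symm), mul_one]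
  rw [this]
  ring

lemma Zbp_B'_eq (X : BoundaryPair q) (lam : ℝ) (hne : X.B (X.w, X.f) ≠ X.B' (X.w, X.f)) :
    Zbp X lam X.B' = ci X lam (X.B (X.w, X.f)) + lam * ci X lam (X.B' (X.w, X.f))
      + cOut X lam := by
  rw [Zbp_eq]
  have : ∀ σ ∈ CF q X.R, (lam : ℝ) ^ monFull X X.B' σ
      = lam ^ monExS X σ * (if X.B' (X.w, X.f) = σ X.f then lam else 1) := by
    intro σ _
    rw [monFull_B'_eq, pow_add]
    by_cases h : X.B' (X.w, X.f) = σ X.f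
    · rw [if_pos h, if_pos h, pow_one]
    · rw [if_neg h, if_neg h, pow_zero]
  rw [Finset.sum_congr rfl this,
    sum_CF_fiber X lam (fun i => if X.B' (X.w, X.f) = i then lam else 1),
    sum_Icc_split X.hBs.1 X.hBs.2 X.hB's.1 X.hB's.2 hne
      (fun i => ci X lam i * (if X.B' (X.w, X.f) = i then lam else 1))]
  rw [if_pos rfl, if_neg (fun h => hne h.symm), cOut]
  have : ∑ i ∈ (Finset.Icc 1 q).filter
      (fun i => i ≠ X.B (X.w, X.f) ∧ i ≠ X.B' (X.w, X.f)),
      ci X lam i * (if X.B' (X.w, X.f) = i then lam else 1)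
      = ∑ i ∈ (Finset.Icc 1 q).filter
      (fun i => i ≠ X.B (X.w, X.f) ∧ i ≠ X.B' (X.w, X.f)), ci X lam i := by
    apply Finset.sum_congr rfl
    intro i hi
    rw [Finset.mem_filter] at hi
    rw [if_neg (fun h => hi.2.2 h.symm), mul_one]
  rw [this]
  ring

lemma nu_bddBelow (X : BoundaryPair q) (lam : ℝ) :
    BddBelow {r : ℝ | ∃ ψ, IsCoupling X lam ψ ∧ r = disagree X ψ} := by
  refine ⟨0, ?_⟩
  rintro r ⟨ψ, hψ, rfl⟩
  rw [disagree, finsum_mem_def]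
  exact finsum_nonneg (fun p => Set.indicator_nonneg (fun p _ => hψ.1 p) p)

lemma nu_le_of_coupling (X : BoundaryPair q) (lam : ℝ) {ψ : ((V → ℕ) × (V → ℕ)) → ℝ}
    (hψ : IsCoupling X lam ψ) : nu X lam ≤ disagree X ψ :=
  csInf_le (nu_bddBelow X lam) ⟨ψ, hψ, rfl⟩

lemma min_add_max_sub (x y : ℝ) : min x y + max (x - y) 0 = x := by
  rcases le_total x y with h | h
  · rw [min_eq_left h, max_eq_right (by linarith), add_zero]
  · rw [min_eq_right h, max_eq_left (by linarith)]; ring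

/-- The coupling step: `ν(X)` is at most the total-variation-style quantity `D`. -/
lemma nu_le_D (X : BoundaryPair q) {lam : ℝ} (hlam0 : 0 < lam) (h1q : 1 ≤ q) :
    nu X lam ≤ ∑ σ ∈ CF q X.R,
      max (gibbsbp X lam X.B σ - gibbsbp X lam X.B' σ) 0 := by
  set πB : (V → ℕ) → ℝ := gibbsbp X lam X.B with hπB
  set πB' : (V → ℕ) → ℝ := gibbsbp X lam X.B' with hπB'
  set pB : (V → ℕ) → ℝ := fun σ => max (πB σ - πB' σ) 0 with hpB
  set pB' : (V → ℕ) → ℝ := fun σ => max (πB' σ - πB σ) 0 with hpB'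
  set D : ℝ := ∑ σ ∈ CF q X.R, pB σ with hD
  have hπBnn : ∀ σ, 0 ≤ πB σ := gibbsbp_nonneg X hlam0 h1q X.B
  have hπB'nn : ∀ σ, 0 ≤ πB' σ := gibbsbp_nonneg X hlam0 h1q X.B'
  have hpBnn : ∀ σ, 0 ≤ pB σ := fun σ => le_max_right _ _
  have hpB'nn : ∀ σ, 0 ≤ pB' σ := fun σ => le_max_right _ _
  have hsub : ∀ σ, pB σ - pB' σ = πB σ - πB' σ := by
    intro σ
    rcases le_total (πB σ) (πB' σ) with h | h
    · rw [hpB, hpB']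
      dsimp only
      rw [max_eq_right (by linarith), max_eq_left (by linarith)]
      ring
    · rw [hpB, hpB']
      dsimp only
      rw [max_eq_left (by linarith), max_eq_right (by linarith)]
      ring
  have hD' : ∑ σ ∈ CF q X.R, pB' σ = D := by
    have h0 : ∑ σ ∈ CF q X.R, (pB σ - pB' σ) = 0 := by
      calc ∑ σ ∈ CF q X.R, (pB σ - pB' σ) = ∑ σ ∈ CF q X.R, (πB σ - πB' σ) :=
            Finset.sum_congr rfl (fun σ _ => hsub σ)
        _ = 0 := by
            rw [Finset.sum_sub_distrib, sum_gibbsbp X hlam0 h1q, sum_gibbsbp X hlam0 h1q]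
            ring
    rw [Finset.sum_sub_distrib] at h0
    rw [hD]
    linarith
  have hDnn : 0 ≤ D := Finset.sum_nonneg (fun σ _ => hpBnn σ)
  by_cases hDz : D = 0
  · -- the two distributions agree; diagonal coupling
    have heq : ∀ σ ∈ CF q X.R, πB σ = πB' σ := by
      intro σ hσ
      have h1 : pB σ = 0 :=
        (Finset.sum_eq_zero_iff_of_nonneg (fun σ _ => hpBnn σ)).1 hDz σ hσ
      have h2 : pB' σ = 0 :=
        (Finset.sum_eq_zero_iff_of_nonneg (fun σ _ => hpB'nn σ)).1 (hD'.trans hDz) σ hσ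
      have := hsub σ
      rw [h1, h2] at this
      linarith
    set ψ : ((V → ℕ) × (V → ℕ)) → ℝ :=
      fun p => if p.1 ∈ CF q X.R ∧ p.2 = p.1 then πB p.1 else 0 with hψdef
    have hcoup : IsCoupling X lam ψ := by
      refine ⟨?_, ?_, ?_, ?_⟩
      · intro p
        rw [hψdef]
        dsimp only
        split
        · exact hπBnn _
        · exact le_refl 0
      · intro p hp
        rw [hψdef]
        dsimp only
        rw [if_neg]
        rintro ⟨h1, h2⟩
        rw [configs_eq_CF] at hp
        rcases hp with hp | hp
        · exact hp h1
        · exact hp (by rw [h2]; exact h1)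
      · intro σ hσ
        rw [configs_eq_CF, Finset.mem_coe] at hσ
        rw [configs_eq_CF, finsum_mem_coe_finset]
        have : ∀ σ' ∈ CF q X.R, ψ (σ, σ') = if σ' = σ then πB σ else 0 := by
          intro σ' _
          rw [hψdef]
          dsimp only
          by_cases h : σ' = σ
          · rw [if_pos h, if_pos ⟨hσ, h⟩]
          · rw [if_neg h, if_neg (fun hh => h hh.2)]
        rw [Finset.sum_congr rfl this, Finset.sum_ite_eq' (CF q X.R) σ (fun _ => πB σ),
          if_pos hσ]
      · intro σ' hσ'
        rw [configs_eq_CF, Finset.mem_coe] at hσ'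
        rw [configs_eq_CF, finsum_mem_coe_finset]
        have : ∀ σ ∈ CF q X.R, ψ (σ, σ') = if σ = σ' then πB σ else 0 := by
          intro σ hσ
          rw [hψdef]
          dsimp only
          by_cases h : σ = σ'
          · rw [if_pos h, if_pos ⟨hσ, h.symm⟩]
          · rw [if_neg h, if_neg (fun hh => h hh.2.symm)]
        rw [Finset.sum_congr rfl this, Finset.sum_ite_eq' (CF q X.R) σ' πB,
          if_pos hσ', heq σ' hσ']
    have hdis : disagree X ψ = 0 := by
      rw [disagree]
      have hzero : Set.EqOn ψ 0 {p : (V → ℕ) × (V → ℕ) | p.1 X.f ≠ p.2 X.f} := by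
        intro p hp
        rw [Set.mem_setOf_eq] at hp
        show ψ p = 0
        rw [hψdef]
        dsimp only
        rw [if_neg]
        rintro ⟨h1, h2⟩
        exact hp (by rw [h2])
      exact finsum_mem_of_eqOn_zero hzero
    calc nu X lam ≤ disagree X ψ := nu_le_of_coupling X lam hcoup
      _ = 0 := hdis
      _ ≤ D := hDnn
  · -- D > 0: the maximal coupling
    have hDpos : 0 < D := lt_of_le_of_ne hDnn (Ne.symm hDz)
    set ψ : ((V → ℕ) × (V → ℕ)) → ℝ := fun p =>
      (if p.1 ∈ CF q X.R ∧ p.2 = p.1 then min (πB p.1) (πB' p.1) else 0)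
      + (if p.1 ∈ CF q X.R ∧ p.2 ∈ CF q X.R then pB p.1 * pB' p.2 / D else 0)
      with hψdef
    have hψnn : ∀ p, 0 ≤ ψ p := by
      intro p
      rw [hψdef]
      dsimp only
      apply add_nonneg
      · split
        · exact le_min (hπBnn _) (hπB'nn _)
        · exact le_refl 0
      · split
        · exact div_nonneg (mul_nonneg (hpBnn _) (hpB'nn _)) hDnn
        · exact le_refl 0
    have hcoup : IsCoupling X lam ψ := by
      refine ⟨hψnn, ?_, ?_, ?_⟩
      · intro p hp
        rw [configs_eq_CF] at hp
        rw [hψdef]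
        dsimp only
        rw [if_neg, if_neg, add_zero]
        · rintro ⟨h1, h2⟩
          rcases hp with hp | hp
          · exact hp h1
          · exact hp h2
        · rintro ⟨h1, h2⟩
          rcases hp with hp | hp
          · exact hp h1
          · exact hp (by rw [h2]; exact h1)
      · intro σ hσ
        rw [configs_eq_CF, Finset.mem_coe] at hσ
        rw [configs_eq_CF, finsum_mem_coe_finset]
        rw [hψdef]
        dsimp only
        rw [Finset.sum_add_distrib]
        have e1 : ∑ σ' ∈ CF q X.R,
            (if σ ∈ CF q X.R ∧ σ' = σ then min (πB σ) (πB' σ) else 0)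
            = min (πB σ) (πB' σ) := by
          have : ∀ σ' ∈ CF q X.R,
              (if σ ∈ CF q X.R ∧ σ' = σ then min (πB σ) (πB' σ) else 0)
              = if σ' = σ then min (πB σ) (πB' σ) else 0 := by
            intro σ' _
            by_cases h : σ' = σ
            · rw [if_pos h, if_pos ⟨hσ, h⟩]
            · rw [if_neg h, if_neg (fun hh => h hh.2)]
          rw [Finset.sum_congr rfl this,
            Finset.sum_ite_eq' (CF q X.R) σ (fun _ => min (πB σ) (πB' σ)), if_pos hσ]
        have e2 : ∑ σ' ∈ CF q X.R,
            (if σ ∈ CF q X.R ∧ σ' ∈ CF q X.R then pB σ * pB' σ' / D else 0)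
            = pB σ := by
          have : ∀ σ' ∈ CF q X.R,
              (if σ ∈ CF q X.R ∧ σ' ∈ CF q X.R then pB σ * pB' σ' / D else 0)
              = pB σ / D * pB' σ' := by
            intro σ' hσ'
            rw [if_pos ⟨hσ, hσ'⟩]
            ring
          rw [Finset.sum_congr rfl this, ← Finset.mul_sum, hD']
          field_simp
        rw [e1, e2]
        have hmin : ∀ x y : ℝ, min x y + max (x - y) 0 = x := min_add_max_sub
        exact hmin (πB σ) (πB' σ)
      · intro σ' hσ'
        rw [configs_eq_CF, Finset.mem_coe] at hσ'
        rw [configs_eq_CF, finsum_mem_coe_finset]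
        rw [hψdef]
        dsimp only
        rw [Finset.sum_add_distrib]
        have e1 : ∑ σ ∈ CF q X.R,
            (if σ ∈ CF q X.R ∧ σ' = σ then min (πB σ) (πB' σ) else 0)
            = min (πB σ') (πB' σ') := by
          have : ∀ σ ∈ CF q X.R,
              (if σ ∈ CF q X.R ∧ σ' = σ then min (πB σ) (πB' σ) else 0)
              = if σ = σ' then min (πB σ) (πB' σ) else 0 := by
            intro σ hσ
            by_cases h : σ = σ'
            · rw [if_pos h, if_pos ⟨hσ, h.symm⟩]
            · rw [if_neg h, if_neg (fun hh => h hh.2.symm)]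
          rw [Finset.sum_congr rfl this,
            Finset.sum_ite_eq' (CF q X.R) σ' (fun σ => min (πB σ) (πB' σ)), if_pos hσ']
        have e2 : ∑ σ ∈ CF q X.R,
            (if σ ∈ CF q X.R ∧ σ' ∈ CF q X.R then pB σ * pB' σ' / D else 0)
            = pB' σ' := by
          have : ∀ σ ∈ CF q X.R,
              (if σ ∈ CF q X.R ∧ σ' ∈ CF q X.R then pB σ * pB' σ' / D else 0)
              = pB' σ' / D * pB σ := by
            intro σ hσ
            rw [if_pos ⟨hσ, hσ'⟩]
            ring
          rw [Finset.sum_congr rfl this, ← Finset.mul_sum, ← hD]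
          field_simp
        rw [e1, e2]
        have : min (πB σ') (πB' σ') + pB' σ' = πB' σ' := by
          rw [min_comm]
          exact min_add_max_sub (πB' σ') (πB σ')
        exact this
    have hdis : disagree X ψ ≤ D := by
      have hsupp : disagree X ψ = ∑ p ∈ ((CF q X.R) ×ˢ (CF q X.R)).filter
          (fun p => p.1 X.f ≠ p.2 X.f), ψ p := by
        rw [disagree]
        apply finsum_mem_eq_sum_of_inter_support_eq
        ext p
        simp only [Set.mem_inter_iff, Set.mem_setOf_eq, Function.mem_support,
          Finset.coe_filter, Finset.mem_product]
        constructor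
        · rintro ⟨hne, hsup⟩
          refine ⟨⟨?_, hne⟩, hsup⟩
          by_contra hc
          push_neg at hc
          apply hsup
          rw [hψdef]
          dsimp only
          rw [if_neg, if_neg, add_zero]
          · rintro ⟨h1, h2⟩; exact (hc h1) h2
          · rintro ⟨h1, h2⟩
            exact (hc h1) (by rw [h2]; exact h1)
        · rintro ⟨⟨_, hne⟩, hsup⟩
          exact ⟨hne, hsup⟩
      rw [hsupp]
      have hψle : ∀ p ∈ ((CF q X.R) ×ˢ (CF q X.R)).filter (fun p => p.1 X.f ≠ p.2 X.f),
          ψ p ≤ pB p.1 * pB' p.2 / D := by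
        intro p hp
        rw [Finset.mem_filter, Finset.mem_product] at hp
        rw [hψdef]
        dsimp only
        rw [if_neg, if_pos ⟨hp.1.1, hp.1.2⟩, zero_add]
        rintro ⟨h1, h2⟩
        exact hp.2 (by rw [h2])
      calc ∑ p ∈ ((CF q X.R) ×ˢ (CF q X.R)).filter (fun p => p.1 X.f ≠ p.2 X.f), ψ p
          ≤ ∑ p ∈ ((CF q X.R) ×ˢ (CF q X.R)).filter (fun p => p.1 X.f ≠ p.2 X.f),
              pB p.1 * pB' p.2 / D := Finset.sum_le_sum hψle
        _ ≤ ∑ p ∈ (CF q X.R) ×ˢ (CF q X.R), pB p.1 * pB' p.2 / D := by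
            apply Finset.sum_le_sum_of_subset_of_nonneg (Finset.filter_subset _ _)
            intro p _ _
            exact div_nonneg (mul_nonneg (hpBnn _) (hpB'nn _)) hDnn
        _ = D := by
            rw [Finset.sum_product]
            have hone : ∀ σ ∈ CF q X.R, (∑ σ' ∈ CF q X.R, pB σ * pB' σ' / D) = pB σ := by
              intro σ _
              have hh : ∀ σ' ∈ CF q X.R, pB σ * pB' σ' / D = pB σ / D * pB' σ' :=
                fun σ' _ => by ring
              rw [Finset.sum_congr rfl hh, ← Finset.mul_sum, hD']
              field_simp
            rw [Finset.sum_congr rfl hone, ← hD]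
    calc nu X lam ≤ disagree X ψ := nu_le_of_coupling X lam hcoup
      _ ≤ D := hdis

lemma mul_max_zero {c x : ℝ} (hc : 0 ≤ c) : max (c * x) 0 = c * max x 0 := by
  rcases le_total x 0 with h | h
  · rw [max_eq_right (mul_nonpos_of_nonneg_of_nonpos hc h), max_eq_right h, mul_zero]
  · rw [max_eq_left (mul_nonneg hc h), max_eq_left h]

end

end PottsBP

open PottsBP Finset in
theorem nu_le_single_vertex_bound' (q : ℕ) (hq : 3 ≤ q) (lam : ℝ)
    (hlam0 : 0 < lam) (hlam1 : lam ≤ 1) (X : BoundaryPair q) :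
    nu X lam ≤ (1 - lam) /
      (1 + lam + ((3 % (q - 2) : ℕ) : ℝ) * lam ^ (3 / (q - 2) + 1)
        + ((q - 2 - 3 % (q - 2) : ℕ) : ℝ) * lam ^ (3 / (q - 2))) := by
  have h1q : 1 ≤ q := by omega
  set K : ℝ := ((3 % (q - 2) : ℕ) : ℝ) * lam ^ (3 / (q - 2) + 1)
    + ((q - 2 - 3 % (q - 2) : ℕ) : ℝ) * lam ^ (3 / (q - 2)) with hK
  have hdeneq : 1 + lam + ((3 % (q - 2) : ℕ) : ℝ) * lam ^ (3 / (q - 2) + 1)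
      + ((q - 2 - 3 % (q - 2) : ℕ) : ℝ) * lam ^ (3 / (q - 2)) = 1 + lam + K := by
    rw [hK]; ring
  rw [hdeneq]
  have hKnn : 0 ≤ K := by
    rw [hK]
    have := pow_nonneg hlam0.le (3 / (q - 2) + 1)
    have := pow_nonneg hlam0.le (3 / (q - 2))
    positivity
  have hden : (0:ℝ) < 1 + lam + K := by linarith
  have hRHSnn : (0:ℝ) ≤ (1 - lam) / (1 + lam + K) :=
    div_nonneg (by linarith) hden.le
  have hDle := nu_le_D X hlam0 h1q
  by_cases hbb : X.B (X.w, X.f) = X.B' (X.w, X.f)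
  · -- identical boundary conditions: D = 0
    have hgeq : ∀ σ, gibbsbp X lam X.B σ = gibbsbp X lam X.B' σ := by
      intro σ
      have h1 : monFull X X.B σ = monFull X X.B' σ := by
        rw [monFull_B_eq, monFull_B'_eq, hbb]
      have h2 : Zbp X lam X.B = Zbp X lam X.B' := by
        rw [Zbp_eq, Zbp_eq]
        apply Finset.sum_congr rfl
        intro σ' _
        rw [monFull_B_eq, monFull_B'_eq, hbb]
      rw [gibbsbp, gibbsbp, h1, h2]
    refine le_trans hDle ?_
    have hzero : ∑ σ ∈ CF q X.R, max (gibbsbp X lam X.B σ - gibbsbp X lam X.B' σ) 0 = 0 :=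
      Finset.sum_eq_zero (fun σ _ => by rw [hgeq σ]; simp)
    rw [hzero]
    exact hRHSnn
  · -- main case
    refine le_trans hDle ?_
    set bB := X.B (X.w, X.f) with hbB
    set bB' := X.B' (X.w, X.f) with hbB'
    set a := ci X lam bB with ha_def
    set a' := ci X lam bB' with ha'_def
    set c := cOut X lam with hc_def
    have hZB := Zbp_B_eq X lam hbb
    have hZB' := Zbp_B'_eq X lam hbb
    have ha : 0 < a := ci_pos X hlam0 X.hBs.1 X.hBs.2
    have ha' : 0 < a' := ci_pos X hlam0 X.hB's.1 X.hB's.2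
    have hc : 0 ≤ c := by
      rw [hc_def, cOut]
      exact Finset.sum_nonneg (fun i _ => ci_nonneg X hlam0.le i)
    have hKa : K * a ≤ c := cOut_ge X hlam0 hlam1 hq hbb bB
    have hKa' : K * a' ≤ c := cOut_ge X hlam0 hlam1 hq hbb bB'
    set ZB := Zbp X lam X.B with hZBdef
    set ZB' := Zbp X lam X.B' with hZB'def
    have step1 : ∑ σ ∈ CF q X.R, max (gibbsbp X lam X.B σ - gibbsbp X lam X.B' σ) 0
        = ∑ σ ∈ CF q X.R, lam ^ monExS X σ *
            max ((if bB = σ X.f then lam else 1) / ZB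
              - (if bB' = σ X.f then lam else 1) / ZB') 0 := by
      apply Finset.sum_congr rfl
      intro σ _
      rw [gibbsbp_B_eq, gibbsbp_B'_eq, ← mul_sub,
        mul_max_zero (pow_nonneg hlam0.le _)]
    have step2 : ∑ σ ∈ CF q X.R, lam ^ monExS X σ *
            max ((if bB = σ X.f then lam else 1) / ZB
              - (if bB' = σ X.f then lam else 1) / ZB') 0
        = ∑ i ∈ Finset.Icc 1 q, ci X lam i *
            max ((if bB = i then lam else 1) / ZB
              - (if bB' = i then lam else 1) / ZB') 0 :=
      sum_CF_fiber X lam (fun i => max ((if bB = i then lam else 1) / ZB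
              - (if bB' = i then lam else 1) / ZB') 0)
    have step3 : ∑ i ∈ Finset.Icc 1 q, ci X lam i *
            max ((if bB = i then lam else 1) / ZB
              - (if bB' = i then lam else 1) / ZB') 0
        = a * max (lam / ZB - 1 / ZB') 0 + a' * max (1 / ZB - lam / ZB') 0
          + c * max (1 / ZB - 1 / ZB') 0 := by
      rw [sum_Icc_split X.hBs.1 X.hBs.2 X.hB's.1 X.hB's.2 hbb
        (fun i => ci X lam i * max ((if bB = i then lam else 1) / ZB
              - (if bB' = i then lam else 1) / ZB') 0)]
      rw [if_pos rfl, if_pos rfl, if_neg hbb, if_neg (fun h => hbb h.symm)]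
      have hrest : ∑ i ∈ (Finset.Icc 1 q).filter (fun i => i ≠ bB ∧ i ≠ bB'),
          ci X lam i * max ((if bB = i then lam else 1) / ZB
              - (if bB' = i then lam else 1) / ZB') 0
          = (∑ i ∈ (Finset.Icc 1 q).filter (fun i => i ≠ bB ∧ i ≠ bB'), ci X lam i)
            * max (1 / ZB - 1 / ZB') 0 := by
        rw [Finset.sum_mul]
        apply Finset.sum_congr rfl
        intro i hi
        rw [Finset.mem_filter] at hi
        rw [if_neg (fun h => hi.2.1 h.symm), if_neg (fun h => hi.2.2 h.symm)]
      rw [hrest]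
      rw [show (∑ i ∈ (Finset.Icc 1 q).filter (fun i => i ≠ bB ∧ i ≠ bB'), ci X lam i)
          = c from by rw [hc_def, cOut]]
    rw [step1, step2, step3]
    rw [show ZB = lam * a + a' + c from hZB, show ZB' = a + lam * a' + c from hZB']
    exact analytic_bound hlam0 hlam1 ha ha' hc hKnn hKa hKa'


open PottsBP in
/-- Let `q ≥ 3`, `λ ∈ (0,1]`, `v = 3 mod (q−2)` and `u = ⌊3/(q−2)⌋`. Then every
boundary pair `X` satisfies `ν(X) ≤ (1−λ)/(1 + λ + v·λ^{u+1} + (q−2−v)·λ^u)`. -/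
theorem nu_le_single_vertex_bound (q : ℕ) (hq : 3 ≤ q) (lam : ℝ)
    (hlam0 : 0 < lam) (hlam1 : lam ≤ 1) (X : BoundaryPair q) :
    nu X lam ≤ (1 - lam) /
      (1 + lam + ((3 % (q - 2) : ℕ) : ℝ) * lam ^ (3 / (q - 2) + 1)
        + ((q - 2 - 3 % (q - 2) : ℕ) : ℝ) * lam ^ (3 / (q - 2))) := by
  exact nu_le_single_vertex_bound' q hq lam hlam0 hlam1 X
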